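/- arXiv:1310.4353 — 8 statements merged into one kernel-verified Lean document; each statement's English description precedes it below -/
import Mathlib

section
/- Let m ≥ 2, 0 < a < m, gcd(m,a) = 1, and let m²/(ma−1) = [e₁,…,e_s] be the Hirzebruch–Jung expansion of the Wahl singularity 1/m²(1, ma−1), with associated sequences α, β, γ. Fix i with 1 ≤ i ≤ s, and set Δ = m² − β_iα_i and Ω = (ma−1) − γ_iβ_i. Then, whenever the continued fraction [e₁,…,e_{i−1}, e_i − 1, e_{i+1},…,e_s] is well defined, it equals Δ/Ω as a rational number. -/
/-- Hirzebruch–Jung continued fraction `[b i, b (i+1), …, b (i+n-1)]` (`n` terms):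
`hjCF b i n = b i - 1/(b (i+1) - 1/(⋯ - 1/(b (i+n-1))))`, with the conventions
`hjCF b i 0 = 0` and `(0 : ℚ)⁻¹ = 0`. -/
def hjCF (b : ℕ → ℤ) : ℕ → ℕ → ℚ
  | _, 0 => 0
  | i, n + 1 => (b i : ℚ) - (hjCF b (i + 1) n)⁻¹

/-- The continued fraction `[b i, …, b (i+n-1)]` is well defined:
no partial denominator vanishes. -/
def hjWD (b : ℕ → ℤ) : ℕ → ℕ → Prop
  | _, 0 => True
  | i, n + 1 => (n = 0 ∨ hjCF b (i + 1) n ≠ 0) ∧ hjWD b (i + 1) n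

/-- The sequence `x 0 = x0`, `x 1 = x1`, `x (i+1) = b i * x i - x (i-1)` for `i ≥ 1`. -/
def rec2 (x0 x1 : ℤ) (b : ℕ → ℤ) : ℕ → ℤ
  | 0 => x0
  | 1 => x1
  | i + 2 => b (i + 1) * rec2 x0 x1 b (i + 1) - rec2 x0 x1 b i

namespace K1A

/-- continuant K(b i, …, b (i+n-1)) -/
def cont (b : ℕ → ℤ) : ℕ → ℕ → ℤ
  | _, 0 => 1
  | i, 1 => b i
  | i, n + 2 => b i * cont b (i+1) (n+1) - cont b (i+2) n

lemma cont_zero (b : ℕ → ℤ) (i : ℕ) : cont b i 0 = 1 := rfl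
lemma cont_one (b : ℕ → ℤ) (i : ℕ) : cont b i 1 = b i := rfl
lemma cont_succ2 (b : ℕ → ℤ) (i n : ℕ) :
    cont b i (n+2) = b i * cont b (i+1) (n+1) - cont b (i+2) n := rfl

lemma two_step {P : ℕ → Prop} (h0 : P 0) (h1 : P 1)
    (h : ∀ n, P n → P (n+1) → P (n+2)) : ∀ n, P n := by
  have H : ∀ n, P n ∧ P (n+1) := by
    intro n
    induction n with
    | zero => exact ⟨h0, h1⟩
    | succ n ih => exact ⟨ih.2, h n ih.1 ih.2⟩
  exact fun n => (H n).1

lemma cont_right (b : ℕ → ℤ) : ∀ n, ∀ i,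
    cont b i (n+2) = b (i+n+1) * cont b i (n+1) - cont b i n := by
  refine two_step ?_ ?_ ?_
  · intro i; simp [cont]; ring
  · intro i; simp [cont]; ring
  · intro n ih1 ih2 i
    have h1 := ih2 (i+1)
    have h2 := ih1 (i+2)
    rw [show i+1+(n+1)+1 = i+n+3 from by omega] at h1
    rw [show i+2+n+1 = i+n+3 from by omega] at h2
    show cont b i (n+4) = b (i+n+3) * cont b i (n+3) - cont b i (n+2)
    rw [cont_succ2 b i (n+2), cont_succ2 b i (n+1), cont_succ2 b i n]
    rw [show n+2+1 = n+3 from rfl, show n+1+1 = n+2 from rfl] at *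
    linear_combination h1 * b i - h2

lemma cont_congr {b c : ℕ → ℤ} : ∀ n, ∀ i, (∀ k, i ≤ k → k < i + n → b k = c k) →
    cont b i n = cont c i n := by
  refine two_step ?_ ?_ ?_
  · intro i _; rfl
  · intro i h; simpa [cont_one] using h i (le_refl i) (by omega)
  · intro n ih1 ih2 i h
    rw [cont_succ2, cont_succ2, h i (le_refl i) (by omega),
      ih2 (i+1) (fun k hk hk' => h k (by omega) (by omega)),
      ih1 (i+2) (fun k hk hk' => h k (by omega) (by omega))]

lemma cont_pos (b : ℕ → ℤ) : ∀ n, ∀ i, (∀ k, i ≤ k → k ≤ i + n → 2 ≤ b k) →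
    0 < cont b (i+1) n ∧ cont b (i+1) n < cont b i (n+1) := by
  intro n
  induction n with
  | zero => intro i h; refine ⟨one_pos, ?_⟩
            simpa [cont] using lt_of_lt_of_le one_lt_two (h i le_rfl (by omega))
  | succ n ih =>
    intro i h
    obtain ⟨h1, h2⟩ := ih (i+1) (fun k hk hk' => h k (by omega) (by omega))
    have hb : 2 ≤ b i := h i le_rfl (by omega)
    constructor
    · linarith
    · rw [cont_succ2]; nlinarith

lemma cont_det (b : ℕ → ℤ) : ∀ n, ∀ i,
    cont b i (n+2) * cont b (i+1) n - cont b i (n+1) * cont b (i+1) (n+1) = -1 := by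
  intro n
  induction n with
  | zero => intro i; simp [cont]
  | succ n ih =>
    intro i
    have h := ih (i+1)
    show cont b i (n+3) * cont b (i+1) (n+1) - cont b i (n+2) * cont b (i+1) (n+2) = -1
    rw [cont_succ2 b i (n+1), cont_succ2 b i n]
    rw [show n+1+1 = n+2 from rfl, show i+1+1 = i+2 from rfl] at *
    linear_combination h

lemma cont_coprime (b : ℕ → ℤ) (n i : ℕ) :
    IsCoprime (cont b i (n+1)) (cont b (i+1) n) := by
  cases n with
  | zero => exact isCoprime_one_right
  | succ n =>
    have h := cont_det b n i
    exact ⟨-(cont b (i+1) n), cont b i (n+1), by linarith⟩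


lemma hjCF_zero (b : ℕ → ℤ) (i : ℕ) : hjCF b i 0 = 0 := rfl
lemma hjCF_succ (b : ℕ → ℤ) (i n : ℕ) :
    hjCF b i (n+1) = (b i : ℚ) - (hjCF b (i+1) n)⁻¹ := rfl

lemma hjCF_cont (b : ℕ → ℤ) : ∀ n, ∀ i, hjWD b i (n+1) →
    cont b (i+1) n ≠ 0 ∧
    hjCF b i (n+1) = (cont b i (n+1) : ℚ) / (cont b (i+1) n : ℚ) := by
  intro n
  induction n with
  | zero =>
    intro i _
    refine ⟨one_ne_zero, ?_⟩
    simp [hjCF, cont]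
  | succ n ih =>
    intro i hwd
    obtain ⟨hor, hwd'⟩ := hwd
    have hne : hjCF b (i+1) (n+1) ≠ 0 := by
      rcases hor with h | h
      · omega
      · exact h
    obtain ⟨hd, heq⟩ := ih (i+1) hwd'
    have hnum : cont b (i+1) (n+1) ≠ 0 := by
      intro h0
      apply hne
      rw [heq, h0]
      simp
    have hnumQ : (cont b (i+1) (n+1) : ℚ) ≠ 0 := Int.cast_ne_zero.mpr hnum
    have hdQ : (cont b (i+2) n : ℚ) ≠ 0 := by
      rw [show i+2 = i+1+1 from rfl]; exact Int.cast_ne_zero.mpr hd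
    refine ⟨hnum, ?_⟩
    rw [hjCF_succ, heq, cont_succ2]
    rw [show i+1+1 = i+2 from rfl] at *
    push_cast
    field_simp
    try ring

lemma hjWD_of_ge_two (b : ℕ → ℤ) : ∀ n, ∀ i, (∀ k, i ≤ k → k < i + n → 2 ≤ b k) →
    hjWD b i n ∧ (1 ≤ n → 1 < hjCF b i n) := by
  intro n
  induction n with
  | zero => intro i _; exact ⟨trivial, by omega⟩
  | succ n ih =>
    intro i h
    obtain ⟨hwd', hgt⟩ := ih (i+1) (fun k hk hk' => h k (by omega) (by omega))
    have hb : (2:ℚ) ≤ (b i : ℚ) := by exact_mod_cast h i le_rfl (by omega)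
    cases n with
    | zero =>
      refine ⟨⟨Or.inl rfl, trivial⟩, fun _ => ?_⟩
      rw [hjCF_succ, hjCF_zero]
      simpa using by linarith
    | succ n =>
      have h1 : 1 < hjCF b (i+1) (n+1) := hgt (by omega)
      have hne : hjCF b (i+1) (n+1) ≠ 0 := by positivity
      refine ⟨⟨Or.inr hne, hwd'⟩, fun _ => ?_⟩
      rw [hjCF_succ]
      have hinv : (hjCF b (i+1) (n+1))⁻¹ < 1 := by
        rw [inv_lt_one_iff₀]; right; exact h1
      linarith

lemma rec2_alpha (e : ℕ → ℤ) : ∀ j, rec2 0 1 e (j+1) = cont e 1 j := by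
  refine two_step ?_ ?_ ?_
  · rfl
  · simp [rec2, cont]
  · intro j ih1 ih2
    show e (j+2) * rec2 0 1 e (j+2) - rec2 0 1 e (j+1) = cont e 1 (j+2)
    rw [ih1, ih2, cont_right e j 1, show 1+j+1 = j+2 from by omega]

lemma rec2_gamma (e : ℕ → ℤ) : ∀ j, rec2 (-1) 0 e (j+2) = cont e 2 j := by
  refine two_step ?_ ?_ ?_
  · simp [rec2, cont]
  · show e 2 * rec2 (-1) 0 e 2 - rec2 (-1) 0 e 1 = cont e 2 1
    simp [rec2, cont]
  · intro j ih1 ih2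
    show e (j+3) * rec2 (-1) 0 e (j+3) - rec2 (-1) 0 e (j+2) = cont e 2 (j+2)
    rw [ih1, ih2, cont_right e j 2, show 2+j+1 = j+3 from by omega]

lemma rec2_beta (e : ℕ → ℤ) (x0 x1 : ℤ) (u : ℕ)
    (h0 : x0 = cont e 1 (u+1)) (h1 : x1 = cont e 2 u) :
    ∀ j, ∀ t, j + t = u + 1 → rec2 x0 x1 e j = cont e (j+1) t := by
  refine two_step ?_ ?_ ?_
  · intro t ht
    obtain rfl : t = u + 1 := by omega
    exact h0
  · intro t ht
    obtain rfl : t = u := by omega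
    exact h1
  · intro j ih1 ih2 t ht
    have e1 := ih2 (t+1) (by omega)
    have e2 := ih1 (t+2) (by omega)
    show e (j+1) * rec2 x0 x1 e (j+1) - rec2 x0 x1 e j = cont e (j+3) t
    rw [e1, e2, cont_succ2 e (j+1) t, show j+1+1 = j+2 from rfl,
      show j+1+2 = j+3 from rfl]
    ring

section Mod
variable (e : ℕ → ℤ) (i : ℕ)

lemma cont_untouched (n j : ℕ) (h : i < j) :
    cont (fun k => if k = i then e i - 1 else e k) j n = cont e j n := by
  refine cont_congr n j (fun k hk _ => ?_)
  have : k ≠ i := by omega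
  simp [this]

lemma cont_mod_base : ∀ n, cont (fun k => if k = i then e i - 1 else e k) i (n+1) =
    cont e i (n+1) - cont e (i+1) n := by
  intro n
  cases n with
  | zero => simp [cont]
  | succ n =>
    rw [cont_succ2, cont_succ2, cont_untouched e i (n+1) (i+1) (by omega),
      cont_untouched e i n (i+2) (by omega)]
    rw [if_pos rfl]
    ring

lemma cont_mod : ∀ d, ∀ n, ∀ j, j + d = i →
    cont (fun k => if k = i then e i - 1 else e k) j (d+n+1) =
      cont e j (d+n+1) - cont e j d * cont e (i+1) n := by
  set b := fun k => if k = i then e i - 1 else e k with hb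
  refine two_step ?_ ?_ ?_
  · intro n j hj
    obtain rfl : j = i := by omega
    simpa [hb, cont_zero] using cont_mod_base e j n
  · intro n j hj
    have hji : j ≠ i := by omega
    have hbj : b j = e j := by simp [hb, hji]
    rw [show 1+n+1 = n+2 from by omega, cont_succ2 b j n, cont_succ2 e j n, hbj,
      cont_untouched e i n (j+2) (by omega), show j+1 = i from by omega,
      cont_mod_base e i n, cont_one, show i+1 = j+2 from by omega]
    ring
  · intro d ih1 ih2 n j hj
    have hji : j ≠ i := by omega
    have hbj : b j = e j := by simp [hb, hji]
    have e1 := ih2 n (j+1) (by omega)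
    have e2 := ih1 n (j+2) (by omega)
    rw [show d+1+n+1 = d+n+2 from by omega] at e1
    rw [show d+2+n+1 = (d+n+1)+2 from by omega, cont_succ2 b j (d+n+1),
      cont_succ2 e j (d+n+1), hbj, e1, e2, cont_succ2 e j d,
      show d+n+1+1 = d+n+2 from rfl]
    ring

end Mod

end K1A

/-- for a Wahl singularity `m²/(ma-1) = [e₁,…,e_s]` with associated
sequences `β = rec2 (m²) (ma-1) e`, `α = rec2 0 1 e`, `γ = rec2 (-1) 0 e`, and
`Δ = m² - β_iα_i`, `Ω = (ma-1) - γ_iβ_i`: whenever the continued fraction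
`[e₁,…,e_{i-1}, e_i - 1, e_{i+1},…,e_s]` is well defined, it equals `Δ/Ω`. -/


theorem k1A_contraction_fraction (m a : ℤ) (s i : ℕ) (e : ℕ → ℤ)
    (hm : 2 ≤ m) (ha : 0 < a) (ham : a < m) (hgcd : Int.gcd m a = 1)
    (hs : 1 ≤ s) (he : ∀ j, 1 ≤ j → j ≤ s → 2 ≤ e j)
    (hexp : hjCF e 1 s = (m : ℚ) ^ 2 / ((m : ℚ) * (a : ℚ) - 1))
    (hi1 : 1 ≤ i) (his : i ≤ s)
    (hwd : hjWD (fun j => if j = i then e i - 1 else e j) 1 s) :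
    hjCF (fun j => if j = i then e i - 1 else e j) 1 s =
      ((m ^ 2 - rec2 (m ^ 2) (m * a - 1) e i * rec2 0 1 e i : ℤ) : ℚ) /
      (((m * a - 1) - rec2 (-1) 0 e i * rec2 (m ^ 2) (m * a - 1) e i : ℤ) : ℚ) := by
  open K1A in
  obtain ⟨k, rfl⟩ : ∃ k, i = k + 1 := ⟨i - 1, by omega⟩
  obtain ⟨t, rfl⟩ : ∃ t, s = (k + 1) + t := ⟨s - (k+1), by omega⟩
  set b : ℕ → ℤ := fun j => if j = k + 1 then e (k+1) - 1 else e j with hbdef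
  rw [show k+1+t = k+t+1 from by omega] at hexp hwd he ⊢
  set N : ℤ := cont e 1 (k+t+1) with hN
  set D : ℤ := cont e 2 (k+t) with hD
  -- well-definedness and value of the original fraction
  have hwin : ∀ j, 1 ≤ j → j < 1 + (k+t+1) → 2 ≤ e j := fun j h1 h2 => he j h1 (by omega)
  have hwde := (K1A.hjWD_of_ge_two e (k+t+1) 1 hwin).1
  have hval := (K1A.hjCF_cont e (k+t) 1 hwde).2
  have hposD := K1A.cont_pos e (k+t) 1 (fun j h1 h2 => he j h1 (by omega))
  have hDpos : 0 < D := hposD.1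
  have hNpos : 0 < N := lt_trans hDpos hposD.2
  have hcopND : IsCoprime N D := K1A.cont_coprime e (k+t) 1
  have hma1 : (2:ℤ) ≤ m * a := by nlinarith
  have hmaQ : ((m:ℚ) * (a:ℚ) - 1) ≠ 0 := by
    have h2 : ((2:ℚ)) ≤ (m:ℚ) * (a:ℚ) := by exact_mod_cast hma1
    intro h0; rw [sub_eq_zero] at h0; linarith
  have hDQ : ((D:ℚ)) ≠ 0 := Int.cast_ne_zero.mpr (ne_of_gt hDpos)
  have hcross : N * (m * a - 1) = m ^ 2 * D := by
    have hv : (N:ℚ) / (D:ℚ) = (m:ℚ)^2 / ((m:ℚ)*(a:ℚ) - 1) := by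
      rw [← hval, hexp]
    rw [div_eq_div_iff hDQ hmaQ] at hv
    exact_mod_cast hv
  have hcopm : IsCoprime ((m:ℤ)^2) (m*a-1) :=
    IsCoprime.pow_left ⟨a, -1, by ring⟩
  have hdvd1 : (m:ℤ)^2 ∣ N := hcopm.dvd_of_dvd_mul_right ⟨D, hcross⟩
  have hdvd2 : N ∣ (m:ℤ)^2 := hcopND.dvd_of_dvd_mul_right ⟨m*a-1, hcross.symm⟩
  have hNeq : N = m ^ 2 := Int.dvd_antisymm (le_of_lt hNpos) (by positivity) hdvd2 hdvd1
  have hDeq : D = m * a - 1 := by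
    have hm2 : ((m:ℤ)^2) ≠ 0 := by positivity
    apply mul_left_cancel₀ hm2
    rw [← hcross, hNeq]
  -- identify rec2 sequences with continuants
  have hbeta : rec2 (m^2) (m*a-1) e (k+1) = cont e (k+2) t :=
    K1A.rec2_beta e (m^2) (m*a-1) (k+t) (by rw [← hNeq]) (by rw [← hDeq]) (k+1) t (by omega)
  have halpha : rec2 0 1 e (k+1) = cont e 1 k := K1A.rec2_alpha e k
  -- value of the modified fraction
  have hvalb := (K1A.hjCF_cont b (k+t) 1 hwd).2
  -- numerator
  have hnum : m ^ 2 - rec2 (m^2) (m*a-1) e (k+1) * rec2 0 1 e (k+1) = cont b 1 (k+t+1) := by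
    have hmod := K1A.cont_mod e (k+1) k t 1 (by omega)
    rw [← hbdef] at hmod
    rw [hbeta, halpha, ← hNeq, hmod, show k+1+1 = k+2 from rfl, hN]
    ring
  -- denominator
  have hden : (m * a - 1) - rec2 (-1) 0 e (k+1) * rec2 (m^2) (m*a-1) e (k+1)
      = cont b 2 (k+t) := by
    cases k with
    | zero =>
      have hunt := K1A.cont_untouched e (0+1) (0+t) 2 (by omega)
      rw [← hbdef] at hunt
      rw [show rec2 (-1) 0 e (0+1) = 0 from rfl, hunt, ← hD, hDeq]
      ring
    | succ k' =>
      have hgamma : rec2 (-1) 0 e (k'+2) = cont e 2 k' := K1A.rec2_gamma e k'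
      have hmod := K1A.cont_mod e (k'+1+1) k' t 2 (by omega)
      rw [← hbdef] at hmod
      have hDeq' : cont e 2 (k'+1+t) = m*a-1 := by rw [← hD]; exact hDeq
      rw [show k'+1+t = k'+t+1 from by omega] at hDeq' ⊢
      rw [show k'+1+1 = k'+2 from rfl] at hmod hbeta ⊢
      rw [hgamma, hbeta, hmod, show k'+2+1 = k'+3 from rfl,
        show k'+1+2 = k'+3 from rfl, hDeq']
  rw [hvalb, hnum, hden]
end

section
/- Let 1/m₁²(1, m₁a₁−1) and 1/m₂²(1, m₂a₂−1) be Wahl singularities with Hirzebruch–Jung expansions [e₁,…,e_{s₁}] = m₁²/(m₁a₁−1) and [f₁,…,f_{s₂}] = m₂²/(m₂a₂−1). Suppose δ := m₁a₂ + m₂a₁ − m₁m₂ > 0, and set Δ = m₁² + m₂² − δm₁m₂ and Ω = (m₂ − δm₁)(m₂ − a₂) + m₁a₁ − 1. Then, whenever the continued fraction [f_{s₂},…,f₁, 1, e₁,…,e_{s₁}] is well defined, it equals Δ/Ω as a rational number. -/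
/-!
Write `[b₁, …, bₙ]` through the unimodular product `M(b₁) ⋯ M(bₙ)`, `M(x) = !![x, -1; 1, 0]`,
whose first column is (numerator, denominator). For a Wahl chain this column is
`(m², m a - 1)`, and unimodularity together with `0 ≤ -(0,1)-entry < m²` (valid when all
`bⱼ ≥ 2`) pins down the whole matrix. Reversing a chain transposes its matrix and conjugates it
by `diag(1, -1)`, so the matrix of `[f_{s₂}, …, f₁, 1, e₁, …, e_{s₁}]` is an explicit product
of known matrices, and its first column is `(Δ, Ω)`.
-/

open Matrix

/-- Sends the column `(p, q)` to `(x p - q, p)`, i.e. the fraction `p / q` to `x - q / p`. -/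
def hjMat (x : ℤ) : Matrix (Fin 2) (Fin 2) ℤ := !![x, -1; 1, 0]

def hjProd (b : ℕ → ℤ) : ℕ → ℕ → Matrix (Fin 2) (Fin 2) ℤ
  | _, 0 => 1
  | i, n + 1 => hjMat (b i) * hjProd b (i + 1) n

def signFlip : Matrix (Fin 2) (Fin 2) ℤ := diagonal ![1, -1]

/-- The continuant matrix of a Wahl chain `[e₁, …, e_s] = m² / (m a - 1)`. -/
def wahlMatrix (m a : ℤ) : Matrix (Fin 2) (Fin 2) ℤ :=
  !![m ^ 2, m * a + 1 - m ^ 2; m * a - 1, 1 + a ^ 2 - m * a]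

lemma forall_lt_shift {p : ℕ → Prop} {i n : ℕ} (h : ∀ j < n + 1, p (i + j)) :
    ∀ j < n, p (i + 1 + j) :=
  fun j hj => by rw [Nat.add_right_comm]; exact h (j + 1) (by omega)

lemma hjMat_mul_apply_zero (x : ℤ) (A : Matrix (Fin 2) (Fin 2) ℤ) (j : Fin 2) :
    (hjMat x * A) 0 j = x * A 0 j - A 1 j := by
  simp [hjMat, mul_apply, Fin.sum_univ_two, sub_eq_add_neg]

lemma hjMat_mul_apply_one (x : ℤ) (A : Matrix (Fin 2) (Fin 2) ℤ) (j : Fin 2) :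
    (hjMat x * A) 1 j = A 0 j := by
  simp [hjMat, mul_apply, Fin.sum_univ_two]

section hjProd

variable {b c : ℕ → ℤ}

@[simp] lemma hjProd_zero (b : ℕ → ℤ) (i : ℕ) : hjProd b i 0 = 1 := rfl

lemma hjProd_succ (b : ℕ → ℤ) (i n : ℕ) :
    hjProd b i (n + 1) = hjMat (b i) * hjProd b (i + 1) n := rfl

lemma hjProd_add (b : ℕ → ℤ) (i m n : ℕ) :
    hjProd b i (m + n) = hjProd b i m * hjProd b (i + m) n := by
  induction m generalizing i with
  | zero => simp
  | succ m ih =>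
    rw [Nat.add_right_comm, hjProd_succ, ih, hjProd_succ, Matrix.mul_assoc,
      Nat.add_right_comm, Nat.add_assoc i]

lemma hjProd_succ' (b : ℕ → ℤ) (i n : ℕ) :
    hjProd b i (n + 1) = hjProd b i n * hjMat (b (i + n)) := by
  rw [hjProd_add, hjProd_succ, hjProd_zero, Matrix.mul_one]

lemma hjProd_congr {i k n : ℕ} (h : ∀ j < n, b (i + j) = c (k + j)) :
    hjProd b i n = hjProd c k n := by
  induction n generalizing i k with
  | zero => rfl
  | succ n ih =>
    have h0 : b i = c k := by simpa using h 0 n.succ_pos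
    rw [hjProd_succ, hjProd_succ, h0, ih (k := k + 1) fun j hj => ?_]
    simpa [Nat.add_right_comm _ 1, Nat.add_assoc] using h (j + 1) (by omega)

lemma signFlip_mul_self : signFlip * signFlip = 1 := by
  simp [signFlip, ← diagonal_one]

lemma signFlip_mul_transpose_mul (A : Matrix (Fin 2) (Fin 2) ℤ) :
    signFlip * Aᵀ * signFlip = !![A 0 0, -A 1 0; -A 0 1, A 1 1] := by
  ext i j; fin_cases i <;> fin_cases j <;> simp [signFlip]

lemma signFlip_mul_transpose_hjMat_mul (x : ℤ) : signFlip * (hjMat x)ᵀ * signFlip = hjMat x := by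
  rw [signFlip_mul_transpose_mul]; simp [hjMat]

lemma hjProd_reverse {i k n : ℕ} (h : ∀ j < n, c (k + j) = b (i + (n - 1 - j))) :
    hjProd c k n = signFlip * (hjProd b i n)ᵀ * signFlip := by
  induction n generalizing k with
  | zero => simp [signFlip_mul_self]
  | succ n ih =>
    have hk : c k = b (i + n) := by simpa using h 0 n.succ_pos
    rw [hjProd_succ, hjProd_succ', transpose_mul, hk, ih (k := k + 1) fun j hj => ?_]
    · conv_lhs => rw [← signFlip_mul_transpose_hjMat_mul]
      simp only [Matrix.mul_assoc]
      rw [← Matrix.mul_assoc signFlip signFlip, signFlip_mul_self, Matrix.one_mul]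
    · have := h (j + 1) (by omega)
      rwa [show n + 1 - 1 - (j + 1) = n - 1 - j by omega, ← Nat.add_assoc,
        Nat.add_right_comm] at this

lemma det_hjProd (b : ℕ → ℤ) (i n : ℕ) : (hjProd b i n).det = 1 := by
  induction n generalizing i with
  | zero => simp
  | succ n ih => rw [hjProd_succ, det_mul, ih, hjMat, det_fin_two_of]; ring

end hjProd

section bounds

variable {b : ℕ → ℤ} {i n : ℕ}

lemma hjProd_col_bounds (h : ∀ j < n, 2 ≤ b (i + j)) :
    0 ≤ hjProd b i n 1 0 ∧ hjProd b i n 1 0 < hjProd b i n 0 0 := by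
  induction n generalizing i with
  | zero => simp
  | succ n ih =>
    have hb : 2 ≤ b i := by simpa using h 0 n.succ_pos
    obtain ⟨hc, hca⟩ := ih (forall_lt_shift (p := fun k => 2 ≤ b k) h)
    rw [hjProd_succ, hjMat_mul_apply_zero, hjMat_mul_apply_one]
    constructor <;> nlinarith

lemma hjProd_row_bounds (h : ∀ j < n, 2 ≤ b (i + j)) :
    0 ≤ -hjProd b i n 0 1 ∧ -hjProd b i n 0 1 < hjProd b i n 0 0 := by
  have hrev : hjProd (fun j => b (i + (n - 1 - j))) 0 n = signFlip * (hjProd b i n)ᵀ * signFlip :=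
    hjProd_reverse fun j _ => by simp
  have := hjProd_col_bounds (b := fun j => b (i + (n - 1 - j))) (i := 0) (n := n)
    fun j hj => h _ (by omega)
  simpa [hrev, signFlip_mul_transpose_mul] using this

lemma hjProd_one_zero_pos (h : ∀ j < n, 2 ≤ b (i + j)) (hn : 1 ≤ n) : 0 < hjProd b i n 1 0 := by
  obtain ⟨n, rfl⟩ := Nat.exists_eq_add_of_le' hn
  have := hjProd_col_bounds (forall_lt_shift (p := fun k => 2 ≤ b k) h)
  rw [hjProd_succ, hjMat_mul_apply_one]
  omega

end bounds

section value

variable {b : ℕ → ℤ} {i n : ℕ}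

/-- For `n = 0` both sides are `0`: `hjCF b i 0 = 0` and `1 / 0 = 0` in `ℚ`. -/
lemma hjCF_eq_div (hwd : hjWD b i n) :
    hjCF b i n = (hjProd b i n 0 0 : ℚ) / (hjProd b i n 1 0 : ℚ) := by
  induction n generalizing i with
  | zero => simp [hjCF]
  | succ n ih =>
    obtain ⟨hne, hwd⟩ := hwd
    rw [hjCF, ih hwd, hjProd_succ, hjMat_mul_apply_zero, hjMat_mul_apply_one]
    rcases hne with rfl | hne
    · simp
    · have hnum : (hjProd b (i + 1) n 0 0 : ℚ) ≠ 0 := by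
        rintro h; simp [ih hwd, h] at hne
      rw [inv_div]
      push_cast
      field_simp

lemma hjWD_of_two_le (h : ∀ j < n, 2 ≤ b (i + j)) : hjWD b i n := by
  induction n generalizing i with
  | zero => trivial
  | succ n ih =>
    have h' := forall_lt_shift (p := fun k => 2 ≤ b k) h
    refine ⟨?_, ih h'⟩
    rcases Nat.eq_zero_or_pos n with rfl | hn
    · exact Or.inl rfl
    · right
      have hq := hjProd_one_zero_pos h' hn
      have hpq := (hjProd_col_bounds h').2
      rw [hjCF_eq_div (ih h')]
      have : (0 : ℚ) < (hjProd b (i + 1) n 0 0 : ℚ) := by exact_mod_cast hq.trans hpq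
      positivity

lemma isCoprime_of_det_eq_one {A : Matrix (Fin 2) (Fin 2) ℤ} (h : A.det = 1) :
    IsCoprime (A 0 0) (A 1 0) :=
  ⟨A 1 1, -A 0 1, by rw [det_fin_two] at h; linear_combination h⟩

lemma hjProd_col_eq_of_hjCF_eq {p q : ℤ} (h : ∀ j < n, 2 ≤ b (i + j)) (hn : 1 ≤ n) (hq : 0 < q)
    (hpq : IsCoprime p q) (hcf : hjCF b i n = p / q) :
    hjProd b i n 0 0 = p ∧ hjProd b i n 1 0 = q := by
  rw [hjCF_eq_div (hjWD_of_two_le h)] at hcf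
  exact Rat.div_int_inj (hjProd_one_zero_pos h hn) hq
    (Int.isCoprime_iff_gcd_eq_one.mp (isCoprime_of_det_eq_one (det_hjProd b i n)))
    (Int.isCoprime_iff_gcd_eq_one.mp hpq) hcf

end value

lemma isCoprime_sq_mul_sub_one (m a : ℤ) : IsCoprime (m ^ 2) (m * a - 1) :=
  IsCoprime.pow_left ⟨a, -1, by ring⟩

lemma det_wahlMatrix (m a : ℤ) : (wahlMatrix m a).det = 1 := by
  rw [wahlMatrix, det_fin_two_of]; ring

lemma eq_of_det_eq_one {A B : Matrix (Fin 2) (Fin 2) ℤ} (hA : A.det = 1) (hB : B.det = 1)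
    (h00 : A 0 0 = B 0 0) (h10 : A 1 0 = B 1 0)
    (hA01 : 0 ≤ -A 0 1 ∧ -A 0 1 < A 0 0) (hB01 : 0 ≤ -B 0 1 ∧ -B 0 1 < B 0 0) : A = B := by
  rw [det_fin_two] at hA hB
  have hcol : A 0 0 * (A 1 1 - B 1 1) = (A 0 1 - B 0 1) * A 1 0 := by
    linear_combination hA - hB - B 1 1 * h00 + B 0 1 * h10
  have h01 : A 0 1 = B 0 1 := by
    have hdvd : A 0 0 ∣ A 0 1 - B 0 1 :=
      (isCoprime_of_det_eq_one (by rwa [det_fin_two])).dvd_of_dvd_mul_right ⟨_, hcol.symm⟩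
    have := Int.eq_zero_of_abs_lt_dvd hdvd (abs_lt.mpr ⟨by omega, by omega⟩)
    omega
  have h11 : A 1 1 = B 1 1 := by
    rw [h01, sub_self, zero_mul, mul_eq_zero] at hcol
    omega
  ext i j; fin_cases i <;> fin_cases j <;> assumption

lemma wahlMatrix_row_bounds {m a : ℤ} (ha : 0 < a) (ham : a < m) :
    0 ≤ -wahlMatrix m a 0 1 ∧ -wahlMatrix m a 0 1 < wahlMatrix m a 0 0 := by
  simp only [wahlMatrix, of_apply, cons_val', cons_val_zero, cons_val_one, cons_val_fin_one]
  constructor <;> nlinarith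

lemma hjProd_glue {e f g : ℕ → ℤ} {s₁ s₂ : ℕ} (hg : ∀ j, g j = if j ≤ s₂ then f (s₂ + 1 - j)
      else if j = s₂ + 1 then 1 else e (j - (s₂ + 1))) :
    hjProd g 1 (s₂ + 1 + s₁) =
      signFlip * (hjProd f 1 s₂)ᵀ * signFlip * hjMat 1 * hjProd e 1 s₁ := by
  have hhead : hjProd g 1 s₂ = signFlip * (hjProd f 1 s₂)ᵀ * signFlip :=
    hjProd_reverse fun j hj => by rw [hg, if_pos (by omega)]; congr 1; omega
  have hmid : hjProd g (1 + s₂) 1 = hjMat 1 := by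
    rw [hjProd_succ, hjProd_zero, Matrix.mul_one, hg, if_neg (by omega), if_pos (by omega)]
  have htail : hjProd g (1 + (s₂ + 1)) s₁ = hjProd e 1 s₁ :=
    hjProd_congr fun j hj => by rw [hg, if_neg (by omega), if_neg (by omega)]; congr 1; omega
  rw [hjProd_add, hjProd_add, hhead, hmid, htail]

theorem k2A_contraction_fraction_general (m₁ a₁ m₂ a₂ δ : ℤ) (s₁ s₂ : ℕ)
    (e f g : ℕ → ℤ)
    (hm₁ : 2 ≤ m₁) (ha₁ : 0 < a₁)
    (hm₂ : 2 ≤ m₂) (ha₂ : 0 < a₂) (ham₂ : a₂ < m₂)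
    (hs₁ : 1 ≤ s₁) (hs₂ : 1 ≤ s₂)
    (he : ∀ j, 1 ≤ j → j ≤ s₁ → 2 ≤ e j) (hf : ∀ j, 1 ≤ j → j ≤ s₂ → 2 ≤ f j)
    (hexpe : hjCF e 1 s₁ = (m₁ : ℚ) ^ 2 / ((m₁ : ℚ) * (a₁ : ℚ) - 1))
    (hexpf : hjCF f 1 s₂ = (m₂ : ℚ) ^ 2 / ((m₂ : ℚ) * (a₂ : ℚ) - 1))
    (hδdef : δ = m₁ * a₂ + m₂ * a₁ - m₁ * m₂)
    (hg : ∀ j, g j = if j ≤ s₂ then f (s₂ + 1 - j)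
      else if j = s₂ + 1 then 1 else e (j - (s₂ + 1)))
    (hwd : hjWD g 1 (s₂ + 1 + s₁)) :
    hjCF g 1 (s₂ + 1 + s₁) =
      ((m₁ ^ 2 + m₂ ^ 2 - δ * m₁ * m₂ : ℤ) : ℚ) /
      (((m₂ - δ * m₁) * (m₂ - a₂) + m₁ * a₁ - 1 : ℤ) : ℚ) := by
  have he' : ∀ j < s₁, 2 ≤ e (1 + j) := fun j hj => he _ (by omega) (by omega)
  have hf' : ∀ j < s₂, 2 ≤ f (1 + j) := fun j hj => hf _ (by omega) (by omega)
  obtain ⟨hE00, hE10⟩ := hjProd_col_eq_of_hjCF_eq he' hs₁ (by nlinarith)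
    (isCoprime_sq_mul_sub_one m₁ a₁) (by rw [hexpe]; push_cast; rfl)
  obtain ⟨hF00, hF10⟩ := hjProd_col_eq_of_hjCF_eq hf' hs₂ (by nlinarith)
    (isCoprime_sq_mul_sub_one m₂ a₂) (by rw [hexpf]; push_cast; rfl)
  have hF : hjProd f 1 s₂ = wahlMatrix m₂ a₂ :=
    eq_of_det_eq_one (det_hjProd f 1 s₂) (det_wahlMatrix m₂ a₂) hF00 hF10
      (hjProd_row_bounds hf') (wahlMatrix_row_bounds ha₂ ham₂)
  have hG : hjProd g 1 (s₂ + 1 + s₁) 0 0 = m₁ ^ 2 + m₂ ^ 2 - δ * m₁ * m₂ ∧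
      hjProd g 1 (s₂ + 1 + s₁) 1 0 = (m₂ - δ * m₁) * (m₂ - a₂) + m₁ * a₁ - 1 := by
    rw [hjProd_glue hg, hF, signFlip_mul_transpose_mul]
    simp only [mul_apply, Fin.sum_univ_two, wahlMatrix, hjMat, of_apply, cons_val', cons_val_zero,
      cons_val_one, cons_val_fin_one, hE00, hE10, hδdef]
    constructor <;> ring
  rw [hjCF_eq_div hwd, hG.1, hG.2]

/-- for two Wahl singularities with expansions `[e₁,…,e_{s₁}]` and
`[f₁,…,f_{s₂}]`, `δ = m₁a₂ + m₂a₁ - m₁m₂ > 0`, `Δ = m₁² + m₂² - δm₁m₂`, and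
`Ω = (m₂ - δm₁)(m₂ - a₂) + m₁a₁ - 1`: if the continued fraction
`[f_{s₂},…,f₁, 1, e₁,…,e_{s₁}]` is well defined, it equals `Δ/Ω`. -/
theorem k2A_contraction_fraction (m₁ a₁ m₂ a₂ δ : ℤ) (s₁ s₂ : ℕ)
    (e f g : ℕ → ℤ)
    (hm₁ : 2 ≤ m₁) (ha₁ : 0 < a₁) (ham₁ : a₁ < m₁) (hgcd₁ : Int.gcd m₁ a₁ = 1)
    (hm₂ : 2 ≤ m₂) (ha₂ : 0 < a₂) (ham₂ : a₂ < m₂) (hgcd₂ : Int.gcd m₂ a₂ = 1)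
    (hs₁ : 1 ≤ s₁) (hs₂ : 1 ≤ s₂)
    (he : ∀ j, 1 ≤ j → j ≤ s₁ → 2 ≤ e j) (hf : ∀ j, 1 ≤ j → j ≤ s₂ → 2 ≤ f j)
    (hexpe : hjCF e 1 s₁ = (m₁ : ℚ) ^ 2 / ((m₁ : ℚ) * (a₁ : ℚ) - 1))
    (hexpf : hjCF f 1 s₂ = (m₂ : ℚ) ^ 2 / ((m₂ : ℚ) * (a₂ : ℚ) - 1))
    (hδdef : δ = m₁ * a₂ + m₂ * a₁ - m₁ * m₂) (hδ : 0 < δ)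
    (hg : ∀ j, g j = if j ≤ s₂ then f (s₂ + 1 - j)
      else if j = s₂ + 1 then 1 else e (j - (s₂ + 1)))
    (hwd : hjWD g 1 (s₂ + 1 + s₁)) :
    hjCF g 1 (s₂ + 1 + s₁) =
      ((m₁ ^ 2 + m₂ ^ 2 - δ * m₁ * m₂ : ℤ) : ℚ) /
      (((m₂ - δ * m₁) * (m₂ - a₂) + m₁ * a₁ - 1 : ℤ) : ℚ) :=
  k2A_contraction_fraction_general m₁ a₁ m₂ a₂ δ s₁ s₂ e f g hm₁ ha₁ hm₂ ha₂ ham₂ hs₁ hs₂ he hf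
    hexpe hexpf hδdef hg hwd
end

section
/- Let 1/m₁²(1, m₁a₁−1) and 1/m₂²(1, m₂a₂−1) be Wahl singularities with Hirzebruch–Jung expansions [e₁,…,e_{s₁}] = m₁²/(m₁a₁−1) and [f₁,…,f_{s₂}] = m₂²/(m₂a₂−1), and let c ≥ 1 be an integer with δ := c·m₁m₂ − m₁a₂ − m₂a₁ > 0. Set Δ = m₁² + m₂² + δm₁m₂ and Ω = −m₁²(c−1) + (m₂ + δm₁)(m₂ − a₂) + m₁a₁ − 1. Then, whenever the continued fraction [f_{s₂},…,f₁, c, e₁,…,e_{s₁}] is well defined, it equals Δ/Ω as a rational number. -/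
namespace HJaux

def num (b : ℕ → ℤ) : ℕ → ℕ → ℤ
  | _, 0 => 1
  | i, 1 => b i
  | i, n+2 => b i * num b (i+1) (n+1) - num b (i+2) n

lemma num_zero (b : ℕ → ℤ) (i : ℕ) : num b i 0 = 1 := by simp [num]
lemma num_one (b : ℕ → ℤ) (i : ℕ) : num b i 1 = b i := by simp [num]
lemma num_rec (b : ℕ → ℤ) (i n : ℕ) :
    num b i (n+2) = b i * num b (i+1) (n+1) - num b (i+2) n := by simp [num]

/-- `num` only depends on the entries in range. -/
lemma num_congr : ∀ (n : ℕ) (b b' : ℕ → ℤ) (i i' : ℕ),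
    (∀ j, j < n → b (i+j) = b' (i'+j)) → num b i n = num b' i' n := by
  intro n
  induction n using Nat.strong_induction_on with
  | _ n ih =>
    match n with
    | 0 => intro b b' i i' _; simp [num]
    | 1 =>
      intro b b' i i' h
      have := h 0 (by omega)
      simpa [num] using this
    | (n+2) =>
      intro b b' i i' h
      rw [num_rec, num_rec]
      have h1 : num b (i+1) (n+1) = num b' (i'+1) (n+1) := by
        refine ih (n+1) (by omega) _ _ _ _ (fun j hj => ?_)
        have := h (1+j) (by omega)
        simpa [show i+(1+j) = i+1+j by omega, show i'+(1+j) = i'+1+j by omega] using this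
      have h2 : num b (i+2) n = num b' (i'+2) n := by
        refine ih n (by omega) _ _ _ _ (fun j hj => ?_)
        have := h (2+j) (by omega)
        simpa [show i+(2+j) = i+2+j by omega, show i'+(2+j) = i'+2+j by omega] using this
      have h0 := h 0 (by omega)
      simp only [Nat.add_zero] at h0
      rw [h0, h1, h2]

/-- Front recurrence. -/
lemma num_front : ∀ (n : ℕ) (b : ℕ → ℤ) (i : ℕ),
    num b i (n+2) = b (i+n+1) * num b i (n+1) - num b i n := by
  intro n
  induction n using Nat.strong_induction_on with
  | _ n ih =>
    match n with
    | 0 =>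
      intro b i
      simp [num]
      ring
    | 1 =>
      intro b i
      simp [num]
      ring
    | (n+2) =>
      intro b i
      rw [num_rec b i (n+2), ih (n+1) (by omega) b (i+1), ih n (by omega) b (i+2)]
      rw [show n+2+1 = n+1+2 from by omega, num_rec b i (n+1), num_rec b i n]
      simp only [show i+1+(n+1)+1 = i+(n+2)+1 from by omega,
        show i+2+n+1 = i+(n+2)+1 from by omega]
      ring

/-- Determinant identity. -/
lemma num_star : ∀ (n : ℕ) (b : ℕ → ℤ) (i : ℕ),
    num b i (n+1) * num b (i+1) (n+1) - num b i (n+2) * num b (i+1) n = 1 := by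
  intro n
  induction n with
  | zero =>
    intro b i
    simp [num]
  | succ n ih =>
    intro b i
    rw [num_rec b i (n+1), num_rec b i n]
    linear_combination ih b (i+1)

/-- Splitting identity. -/
lemma num_split : ∀ (n : ℕ) (b : ℕ → ℤ) (i m : ℕ),
    num b i (n+1+(m+1)) =
      num b i (n+1) * num b (i+n+1) (m+1) - num b i n * num b (i+n+2) m := by
  intro n
  induction n using Nat.strong_induction_on with
  | _ n ih =>
    match n with
    | 0 =>
      intro b i m
      rw [show 0+1+(m+1) = m+2 by omega, num_rec, num_zero, num_one]
      ring
    | 1 =>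
      intro b i m
      rw [show 1+1+(m+1) = (m+1)+2 by omega, num_rec b i (m+1)]
      have h0 := ih 0 (by omega) b (i+1) m
      rw [show 0+1+(m+1) = m+2 by omega] at h0
      rw [h0]
      rw [show i+1+0+1 = i+1+1 by omega, show i+1+0+2 = i+1+2 by omega]
      simp only [num_zero, num_one, num_rec]
      rw [show i+1+1 = i+2 by omega, show i+1+2 = i+3 by omega,
        show i+2+1 = i+3 by omega]
      ring
    | (n+2) =>
      intro b i m
      rw [show n+2+1+(m+1) = (n+2+m)+2 by omega, num_rec b i (n+2+m)]
      have h1 := ih (n+1) (by omega) b (i+1) m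
      have h2 := ih n (by omega) b (i+2) m
      rw [show n+1+1+(m+1) = n+2+m+1 by omega] at h1
      rw [show n+1+(m+1) = n+2+m by omega] at h2
      rw [h1, h2]
      rw [show n+2+1 = n+1+2 from by omega, num_rec b i (n+1), num_rec b i n]
      simp only [show i+1+(n+1)+1 = i+(n+2)+1 from by omega,
        show i+1+(n+1)+2 = i+(n+2)+2 from by omega,
        show i+2+n+1 = i+(n+2)+1 from by omega,
        show i+2+n+2 = i+(n+2)+2 from by omega]
      ring

/-- Entries ≥ 2 give value > 1 and well-definedness. -/
lemma hj_pos : ∀ (n : ℕ) (b : ℕ → ℤ) (i : ℕ),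
    (∀ j, i ≤ j → j ≤ i + n → 2 ≤ b j) →
    1 < hjCF b i (n+1) ∧ hjWD b i (n+1) := by
  intro n
  induction n with
  | zero =>
    intro b i h
    have h2 : (2:ℚ) ≤ (b i : ℚ) := by exact_mod_cast h i le_rfl (by omega)
    constructor
    · simp [hjCF]; linarith
    · exact ⟨Or.inl rfl, trivial⟩
  | succ n ih =>
    intro b i h
    obtain ⟨hv, hw⟩ := ih b (i+1) (fun j h1 h2 => h j (by omega) (by omega))
    have h2 : (2:ℚ) ≤ (b i : ℚ) := by exact_mod_cast h i le_rfl (by omega)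
    have hpos : 0 < hjCF b (i+1) (n+1) := by linarith
    have hinv : (hjCF b (i+1) (n+1))⁻¹ < 1 := by
      rw [inv_lt_one_iff₀]; right; exact hv
    have hinvpos : 0 < (hjCF b (i+1) (n+1))⁻¹ := by positivity
    constructor
    · show 1 < (b i : ℚ) - (hjCF b (i+1) (n+1))⁻¹
      linarith
    · exact ⟨Or.inr (ne_of_gt hpos), hw⟩

/-- Entries ≥ 2 give positive, increasing numerators. -/
lemma num_gt : ∀ (n : ℕ) (b : ℕ → ℤ) (i : ℕ),
    (∀ j, i ≤ j → j ≤ i + n → 2 ≤ b j) →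
    num b (i+1) n < num b i (n+1) ∧ 0 < num b (i+1) n := by
  intro n
  induction n with
  | zero =>
    intro b i h
    have := h i le_rfl (by omega)
    simp [num]
    omega
  | succ n ih =>
    intro b i h
    obtain ⟨h1, h2⟩ := ih b (i+1) (fun j ha hb => h j (by omega) (by omega))
    have hb := h i le_rfl (by omega)
    rw [num_rec]
    constructor
    · nlinarith
    · omega

/-- Prefix numerators strictly increase. -/
lemma prefix_lt : ∀ (k : ℕ) (b : ℕ → ℤ),
    (∀ j, 1 ≤ j → j ≤ k+1 → 2 ≤ b j) →
    num b 1 k < num b 1 (k+1) ∧ 0 < num b 1 k := by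
  intro k
  induction k with
  | zero =>
    intro b h
    have := h 1 le_rfl (by omega)
    simp [num]; omega
  | succ k ih =>
    intro b h
    obtain ⟨h1, h2⟩ := ih b (fun j ha hb => h j ha (by omega))
    have hb : 2 ≤ b (k+2) := h (k+2) (by omega) (by omega)
    rw [num_front k b 1]
    rw [show 1+k+1 = k+2 by omega]
    constructor
    · nlinarith
    · omega

/-- Representation of a well-defined continued fraction as a ratio of numerators. -/
lemma rep : ∀ (n : ℕ) (b : ℕ → ℤ) (i : ℕ), hjWD b i (n+1) →
    hjCF b i (n+1) = (num b i (n+1) : ℚ) / (num b (i+1) n : ℚ) := by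
  intro n
  induction n with
  | zero =>
    intro b i _
    simp [hjCF, num]
  | succ n ih =>
    intro b i hwd
    obtain ⟨hne, hwd'⟩ := hwd
    have hne' : hjCF b (i+1) (n+1) ≠ 0 := by
      rcases hne with h | h
      · omega
      · exact h
    have hrep := ih b (i+1) hwd'
    have hx : (num b (i+1) (n+1) : ℚ) ≠ 0 := by
      intro h0
      rw [hrep, h0, zero_div] at hne'
      exact hne' rfl
    show (b i : ℚ) - (hjCF b (i+1) (n+1))⁻¹ = _
    rw [hrep, num_rec]
    rw [inv_div]
    push_cast
    field_simp

/-- Reversal lemma. -/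
lemma num_rev (f g : ℕ → ℤ) (u : ℕ)
    (hg : ∀ j k, 1 ≤ j → 1 ≤ k → j + k = u + 2 → g j = f k) :
    ∀ (n : ℕ) (j m : ℕ), 1 ≤ j → 1 ≤ m → m + j + n = u + 3 →
      num g j n = num f m n := by
  intro n
  induction n using Nat.strong_induction_on with
  | _ n ih =>
    match n with
    | 0 => intro j m _ _ _; simp [num]
    | 1 =>
      intro j m hj hm hs
      rw [num_one, num_one]
      exact hg j m hj hm (by omega)
    | (n+2) =>
      intro j m hj hm hs
      rw [num_front n g j, num_rec f m n]
      have hgv : g (j+n+1) = f m := hg (j+n+1) m (by omega) hm (by omega)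
      have h1 : num g j (n+1) = num f (m+1) (n+1) :=
        ih (n+1) (by omega) j (m+1) hj (by omega) (by omega)
      have h2 : num g j n = num f (m+2) n :=
        ih n (by omega) j (m+2) hj (by omega) (by omega)
      rw [hgv, h1, h2]

/-- Pinning down a fraction in lowest terms. -/
lemma frac_unique (a b c d : ℤ) (hb : 0 < b) (hd : 0 < d)
    (h1 : IsCoprime a b) (h2 : IsCoprime c d)
    (h : (a:ℚ)/b = (c:ℚ)/d) : a = c ∧ b = d := by
  rw [div_eq_div_iff (by exact_mod_cast hb.ne') (by exact_mod_cast hd.ne')] at h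
  have h' : a * d = c * b := by exact_mod_cast h
  have hbd : b ∣ d := by
    have : b ∣ a * d := ⟨c, by linarith⟩
    exact h1.symm.dvd_of_dvd_mul_left this
  have hdb : d ∣ b := by
    have : d ∣ c * b := ⟨a, by linarith⟩
    exact h2.symm.dvd_of_dvd_mul_left this
  have hbd' : b = d := Int.dvd_antisymm hb.le hd.le hbd hdb
  refine ⟨?_, hbd'⟩
  subst hbd'
  exact mul_right_cancel₀ hb.ne' h'

end HJaux



namespace HJaux

lemma helper_ma1 (m a : ℤ) (hm : 2 ≤ m) (ha : 0 < a) : 0 < m*a - 1 := by nlinarith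

lemma helper_R0pos (m a : ℤ) (hm : 2 ≤ m) (ha : 0 < a) (ham : a < m) :
    1 ≤ m^2 - m*a - 1 ∧ m^2 - m*a - 1 < m^2 := by constructor <;> nlinarith

lemma helper_Rident (P R R0 : ℤ) (hdvd : P ∣ R - R0) (h1 : 0 < R) (h2 : R < P)
    (h3 : 1 ≤ R0) (h4 : R0 < P) : R = R0 := by
  have := Int.eq_zero_of_abs_lt_dvd hdvd (by rw [abs_lt]; omega)
  omega

lemma helper_s21 (m a : ℤ) (hm : 2 ≤ m) (ha : 0 < a) (h : (1:ℤ) = m*a - 1) :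
    a = 1 ∧ m = 2 := by
  have h2 : m * a = 2 := by linarith
  have ha' : a ≤ 2 := Int.le_of_dvd (by norm_num) ⟨m, by linear_combination -h2⟩
  have ha1 : a = 1 := by
    rcases (by omega : a = 1 ∨ a = 2) with h' | h'
    · exact h'
    · subst h'; omega
  subst ha1
  exact ⟨rfl, by omega⟩

end HJaux

set_option maxHeartbeats 2000000 in
open HJaux in
/-- for two Wahl singularities with expansions `[e₁,…,e_{s₁}]` and
`[f₁,…,f_{s₂}]`, an integer `c ≥ 1` with `δ = cm₁m₂ - m₁a₂ - m₂a₁ > 0`,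
`Δ = m₁² + m₂² + δm₁m₂` and `Ω = -m₁²(c-1) + (m₂ + δm₁)(m₂ - a₂) + m₁a₁ - 1`:
if the continued fraction `[f_{s₂},…,f₁, c, e₁,…,e_{s₁}]` is well defined,
it equals `Δ/Ω`. -/
theorem extremal_P_resolution_fraction (m₁ a₁ m₂ a₂ c δ : ℤ) (s₁ s₂ : ℕ)
    (e f g : ℕ → ℤ)
    (hm₁ : 2 ≤ m₁) (ha₁ : 0 < a₁) (ham₁ : a₁ < m₁) (hgcd₁ : Int.gcd m₁ a₁ = 1)
    (hm₂ : 2 ≤ m₂) (ha₂ : 0 < a₂) (ham₂ : a₂ < m₂) (hgcd₂ : Int.gcd m₂ a₂ = 1)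
    (hs₁ : 1 ≤ s₁) (hs₂ : 1 ≤ s₂)
    (he : ∀ j, 1 ≤ j → j ≤ s₁ → 2 ≤ e j) (hf : ∀ j, 1 ≤ j → j ≤ s₂ → 2 ≤ f j)
    (hexpe : hjCF e 1 s₁ = (m₁ : ℚ) ^ 2 / ((m₁ : ℚ) * (a₁ : ℚ) - 1))
    (hexpf : hjCF f 1 s₂ = (m₂ : ℚ) ^ 2 / ((m₂ : ℚ) * (a₂ : ℚ) - 1))
    (hc : 1 ≤ c)
    (hδdef : δ = c * m₁ * m₂ - m₁ * a₂ - m₂ * a₁) (hδ : 0 < δ)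
    (hg : ∀ j, g j = if j ≤ s₂ then f (s₂ + 1 - j)
      else if j = s₂ + 1 then c else e (j - (s₂ + 1)))
    (hwd : hjWD g 1 (s₂ + 1 + s₁)) :
    hjCF g 1 (s₂ + 1 + s₁) =
      ((m₁ ^ 2 + m₂ ^ 2 + δ * m₁ * m₂ : ℤ) : ℚ) /
      ((-m₁ ^ 2 * (c - 1) + (m₂ + δ * m₁) * (m₂ - a₂) + m₁ * a₁ - 1 : ℤ) : ℚ) := by
  subst hδdef
  obtain ⟨t, rfl⟩ : ∃ t, s₁ = t + 1 := ⟨s₁ - 1, by omega⟩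
  obtain ⟨u, rfl⟩ : ∃ u, s₂ = u + 1 := ⟨s₂ - 1, by omega⟩
  -- e-side facts
  have hepos := hj_pos t e 1 (fun j h1 h2 => he j h1 (by omega))
  have herep := rep t e 1 hepos.2
  have hegt := num_gt t e 1 (fun j h1 h2 => he j h1 (by omega))
  simp only [show (1:ℕ)+1 = 2 from rfl] at herep hegt
  have heco : IsCoprime (num e 1 (t+1)) (num e 2 t) := by
    have hst := num_star t e 1
    simp only [show (1:ℕ)+1 = 2 from rfl] at hst
    exact ⟨num e 2 (t+1), -(num e 1 (t+2)), by linear_combination hst⟩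
  have hco1 : IsCoprime (m₁^2) (m₁*a₁ - 1) :=
    (show IsCoprime m₁ (m₁*a₁-1) from ⟨a₁, -1, by ring⟩).pow_left
  have hb1 : (0:ℤ) < m₁*a₁ - 1 := helper_ma1 m₁ a₁ hm₁ ha₁
  have hee : m₁^2 = num e 1 (t+1) ∧ m₁*a₁ - 1 = num e 2 t := by
    refine frac_unique _ _ _ _ hb1 hegt.2 hco1 heco ?_
    push_cast
    rw [← hexpe]
    exact herep
  have hA : num e 1 (t+1) = m₁^2 := hee.1.symm
  have hB : num e 2 t = m₁*a₁ - 1 := hee.2.symm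
  -- f-side facts
  have hfpos := hj_pos u f 1 (fun j h1 h2 => hf j h1 (by omega))
  have hfrep := rep u f 1 hfpos.2
  have hfgt := num_gt u f 1 (fun j h1 h2 => hf j h1 (by omega))
  simp only [show (1:ℕ)+1 = 2 from rfl] at hfrep hfgt
  have hfco : IsCoprime (num f 1 (u+1)) (num f 2 u) := by
    have hst := num_star u f 1
    simp only [show (1:ℕ)+1 = 2 from rfl] at hst
    exact ⟨num f 2 (u+1), -(num f 1 (u+2)), by linear_combination hst⟩
  have hco2 : IsCoprime (m₂^2) (m₂*a₂ - 1) :=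
    (show IsCoprime m₂ (m₂*a₂-1) from ⟨a₂, -1, by ring⟩).pow_left
  have hb2 : (0:ℤ) < m₂*a₂ - 1 := helper_ma1 m₂ a₂ hm₂ ha₂
  have hff : m₂^2 = num f 1 (u+1) ∧ m₂*a₂ - 1 = num f 2 u := by
    refine frac_unique _ _ _ _ hb2 hfgt.2 hco2 hfco ?_
    push_cast
    rw [← hexpf]
    exact hfrep
  have hP : num f 1 (u+1) = m₂^2 := hff.1.symm
  have hQ : num f 2 u = m₂*a₂ - 1 := hff.2.symm
  -- g structure
  have hgrev : ∀ j k, 1 ≤ j → 1 ≤ k → j + k = u + 2 → g j = f k := by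
    intro j k hj hk hjk
    rw [hg j, if_pos (show j ≤ u+1 by omega)]
    congr 1
    omega
  have hrev := num_rev f g u hgrev
  have hgc : g (u+2) = c := by
    rw [hg (u+2), if_neg (by omega), if_pos (by omega)]
  have hge1 : num g (u+3) (t+1) = num e 1 (t+1) := by
    refine num_congr (t+1) g e (u+3) 1 (fun j hj => ?_)
    rw [hg (u+3+j), if_neg (by omega), if_neg (by omega)]
    congr 1
    omega
  have hge2 : num g (u+4) t = num e 2 t := by
    refine num_congr t g e (u+4) 2 (fun j hj => ?_)
    rw [hg (u+4+j), if_neg (by omega), if_neg (by omega)]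
    congr 1
    omega
  have hM : num g (u+2) (t+2) = c * num e 1 (t+1) - num e 2 t := by
    rw [num_rec g (u+2) t, hgc]
    rw [show u+2+1 = u+3 from by omega, show u+2+2 = u+4 from by omega, hge1, hge2]
  -- numerator of the whole fraction
  have hgP : num g 1 (u+1) = num f 1 (u+1) := hrev (u+1) 1 1 le_rfl le_rfl (by omega)
  have hgQ : num g 1 u = num f 2 u := hrev u 1 2 le_rfl (by omega) (by omega)
  have hN : num g 1 (u+t+2+1) =
      num f 1 (u+1) * (c * num e 1 (t+1) - num e 2 t) - num f 2 u * num e 1 (t+1) := by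
    have h := num_split u g 1 (t+1)
    rw [show u+1+(t+1+1) = u+t+2+1 from by omega, show 1+u+1 = u+2 from by omega,
      show 1+u+2 = u+3 from by omega] at h
    rw [h, hgP, hgQ, hM, hge1]
  have hNval : num g 1 (u+t+2+1) =
      m₁ ^ 2 + m₂ ^ 2 + (c * m₁ * m₂ - m₁ * a₂ - m₂ * a₁) * m₁ * m₂ := by
    rw [hN, hP, hQ, hA, hB]; ring
  -- denominator of the whole fraction
  have hDval : num g 2 (u+t+2) =
      -m₁ ^ 2 * (c - 1) + (m₂ + (c * m₁ * m₂ - m₁ * a₂ - m₂ * a₁) * m₁) * (m₂ - a₂)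
        + m₁ * a₁ - 1 := by
    obtain _ | v := u
    · -- s₂ = 1
      have h1 : (1:ℤ) = m₂*a₂ - 1 := by rw [← hQ, num_zero]
      obtain ⟨ha2', hm2'⟩ := helper_s21 m₂ a₂ hm₂ ha₂ h1
      subst ha2'
      subst hm2' 
      have hM0 : num g 2 (t+2) = c * num e 1 (t+1) - num e 2 t := by
        rw [show (2:ℕ) = 0+2 from rfl] at hM ⊢
        exact hM
      rw [show (0:ℕ)+t+2 = t+2 from by omega, hM0, hA, hB]
      ring
    · -- s₂ ≥ 2
      have h := num_split v g 2 (t+1)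
      rw [show v+1+(t+1+1) = v+1+t+2 from by omega, show 2+v+1 = v+1+2 from by omega,
        show 2+v+2 = v+1+3 from by omega] at h
      have hgR : num g 2 (v+1) = num f 1 (v+1) := hrev (v+1) 2 1 (by omega) le_rfl (by omega)
      have hgS : num g 2 v = num f 2 v := hrev v 2 2 (by omega) (by omega) (by omega)
      have hst := num_star v f 1
      simp only [show (1:ℕ)+1 = 2 from rfl] at hst
      -- identify R = num f 1 (v+1)
      have hpl := prefix_lt (v+1) f (fun j h1 h2 => hf j h1 (by omega))
      have hstar2 : num f 1 (v+1) * (m₂*a₂-1) - m₂^2 * num f 2 v = 1 := by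
        rw [← hQ, ← hP, show v+1+1 = v+2 from by omega]
        linear_combination hst
      have hdvd : (m₂^2 : ℤ) ∣ (m₂*a₂-1) * (num f 1 (v+1) - (m₂^2 - m₂*a₂ - 1)) :=
        ⟨num f 2 v - (m₂*a₂ - a₂^2 - 1), by linear_combination hstar2⟩
      have hdvd2 : (m₂^2 : ℤ) ∣ (num f 1 (v+1) - (m₂^2 - m₂*a₂ - 1)) :=
        hco2.dvd_of_dvd_mul_left hdvd
      have hRlt : num f 1 (v+1) < m₂^2 := by
        rw [← hP]
        exact hpl.1
      have hpl2 := prefix_lt v f (fun j h1 h2 => hf j h1 (by omega))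
      have hRpos : 0 < num f 1 (v+1) := lt_trans hpl2.2 hpl2.1
      have hRR : num f 1 (v+1) = m₂^2 - m₂*a₂ - 1 :=
        helper_Rident (m₂^2) _ _ hdvd2 hRpos hRlt
          (helper_R0pos m₂ a₂ hm₂ ha₂ ham₂).1 (helper_R0pos m₂ a₂ hm₂ ha₂ ham₂).2
      -- put it together
      rw [h, hgR, hgS, hRR, hM, hge1, hA, hB]
      have hSval : m₂^2 * num f 2 v = (m₂^2 - m₂*a₂ - 1) * (m₂*a₂-1) - 1 := by
        linear_combination -hstar2 + (m₂*a₂ - 1) * hRR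
      have hm2ne : (m₂^2 : ℤ) ≠ 0 := by positivity
      apply mul_left_cancel₀ hm2ne
      linear_combination (-(m₁^2 : ℤ)) * hSval
  -- final assembly
  have hwd' : hjWD g 1 (u+t+2+1) := by
    rw [show u+t+2+1 = u+1+1+(t+1) from by omega]
    exact hwd
  rw [show u+1+1+(t+1) = u+t+2+1 from by omega]
  have hrepg := rep (u+t+2) g 1 hwd'
  simp only [show (1:ℕ)+1 = 2 from rfl] at hrepg
  rw [hrepg, hNval, hDval]
end

section
/- Let 2 ≤ m < n, 0 < b < m, 0 < a < n be integers with gcd(m,b) = 1, gcd(n,a) = 1, δ := ma + nb − mn ≥ 2, and m² + n² − δmn > 0. Define ζ₁ = 0, ζ₂ = 1, ζ_{i+1} = δζ_i − ζ_{i−1} for i ≥ 2. Then for every i ≥ 1, both ζ_{i+1}n − ζ_im and ζ_{i+1}a − ζ_i(m−b) are positive integers. -/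
/-!
Both sequences `ζ_{i+1} x - ζ_i y` (for `(x, y) = (n, m)` and `(a, m - b)`) satisfy the recurrence
`w_{i+1} = δ w_i - w_{i-1}`. For `δ ≥ 2` the increments `w_{i+1} - w_i = (δ - 2) w_i + (w_i - w_{i-1})`
never decrease while the terms stay positive, so a solution with `0 < w_1 < w_2` is positive and
increasing. The first terms are `n < δn - m` and `a < δa - (m - b)`; the latter holds because
`a ≤ m - b` would force `ma + nb ≤ mn - (n - m)(m - b) < mn`, contradicting `δ ≥ 2`.
-/

section SecondOrderRecurrence

variable {R : Type*} [CommRing R] {δ : R} {s : ℕ → R}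

theorem recurrence_mul_sub_mul (hs : ∀ i, s (i + 2) = δ * s (i + 1) - s i) (x y : R) (i : ℕ) :
    s (i + 3) * x - s (i + 2) * y = δ * (s (i + 2) * x - s (i + 1) * y) - (s (i + 1) * x - s i * y) := by
  rw [hs (i + 1), hs i]
  ring

variable [LinearOrder R] [IsStrictOrderedRing R]

theorem pos_of_recurrence (hδ : 2 ≤ δ) (hs : ∀ i, s (i + 2) = δ * s (i + 1) - s i)
    (h0 : 0 < s 0) (h01 : s 0 < s 1) (i : ℕ) : 0 < s i := by
  have key : ∀ i, 0 < s i ∧ s i < s (i + 1) := by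
    intro i
    induction i with
    | zero => exact ⟨h0, h01⟩
    | succ k ih =>
      obtain ⟨hpos, hlt⟩ := ih
      refine ⟨hpos.trans hlt, ?_⟩
      rw [hs k]
      nlinarith [mul_nonneg (sub_nonneg.2 hδ) (hpos.trans hlt).le]
  exact (key i).1

theorem mul_sub_mul_pos_of_recurrence (hδ : 2 ≤ δ) (hs : ∀ i, s (i + 2) = δ * s (i + 1) - s i)
    (hs0 : s 0 = 0) (hs1 : s 1 = 1) {x y : R} (hx : 0 < x) (hxy : x < δ * x - y) (i : ℕ) :
    0 < s (i + 1) * x - s i * y := by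
  have hs2 : s 2 = δ := by rw [hs 0, hs0, hs1]; ring
  refine pos_of_recurrence (s := fun i => s (i + 1) * x - s i * y) hδ
    (recurrence_mul_sub_mul hs x y) ?_ ?_ i
  · simpa [hs0, hs1] using hx
  · simpa [hs0, hs1, hs2] using hxy

end SecondOrderRecurrence

theorem sub_lt_of_two_le_mul_add_mul_sub_mul {m n a b : ℤ} (hm : 0 ≤ m) (hmn : m < n) (ha : 0 < a)
    (hδ : 2 ≤ m * a + n * b - m * n) : m - b < a := by
  by_contra! h
  nlinarith [mul_le_mul_of_nonneg_left h hm, mul_pos (sub_pos.2 hmn) (ha.trans_le h)]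

theorem mori_sequence_positive_general (m n a b δ : ℤ) (ζ : ℕ → ℤ)
    (hm : 2 ≤ m) (hmn : m < n)
    (ha : 0 < a)
    (hδdef : δ = m * a + n * b - m * n) (hδ : 2 ≤ δ)
    (hζ1 : ζ 1 = 0) (hζ2 : ζ 2 = 1)
    (hζ : ∀ i, 2 ≤ i → ζ (i + 1) = δ * ζ i - ζ (i - 1)) :
    ∀ i, 1 ≤ i → 0 < ζ (i + 1) * n - ζ i * m ∧ 0 < ζ (i + 1) * a - ζ i * (m - b) := by
  intro i hi
  obtain ⟨k, rfl⟩ : ∃ k, i = k + 1 := ⟨i - 1, by omega⟩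
  have hs : ∀ j, ζ (j + 2 + 1) = δ * ζ (j + 1 + 1) - ζ (j + 1) := fun j => hζ (j + 2) (by omega)
  have hab : m - b < a := sub_lt_of_two_le_mul_add_mul_sub_mul (by omega) hmn ha (hδdef ▸ hδ)
  constructor
  · refine mul_sub_mul_pos_of_recurrence (s := fun j => ζ (j + 1)) hδ hs hζ1 hζ2 (by omega) ?_ k
    nlinarith
  · refine mul_sub_mul_pos_of_recurrence (s := fun j => ζ (j + 1)) hδ hs hζ1 hζ2 ha ?_ k
    nlinarith

/-- Mori's sequence `ζ₁ = 0`, `ζ₂ = 1`, `ζ_{i+1} = δζ_i - ζ_{i-1}`,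
for a k2A extremal neighborhood with data `(m,b)`, `(n,a)`, `δ = ma + nb - mn ≥ 2`
and `Δ = m² + n² - δmn > 0`: for every `i ≥ 1`, both `ζ_{i+1}n - ζ_im` and
`ζ_{i+1}a - ζ_i(m-b)` are positive. -/
theorem mori_sequence_positive (m n a b δ : ℤ) (ζ : ℕ → ℤ)
    (hm : 2 ≤ m) (hmn : m < n)
    (hb : 0 < b) (hbm : b < m) (ha : 0 < a) (han : a < n)
    (hgcdm : Int.gcd m b = 1) (hgcdn : Int.gcd n a = 1)
    (hδdef : δ = m * a + n * b - m * n) (hδ : 2 ≤ δ)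
    (hΔ : 0 < m ^ 2 + n ^ 2 - δ * m * n)
    (hζ1 : ζ 1 = 0) (hζ2 : ζ 2 = 1)
    (hζ : ∀ i, 2 ≤ i → ζ (i + 1) = δ * ζ i - ζ (i - 1)) :
    ∀ i, 1 ≤ i → 0 < ζ (i + 1) * n - ζ i * m ∧ 0 < ζ (i + 1) * a - ζ i * (m - b) :=
  mori_sequence_positive_general m n a b δ ζ hm hmn ha hδdef hδ hζ1 hζ2 hζ
end

section
/- Let 2 ≤ m < n, 0 < b < m, 0 < a < n be integers with gcd(m,b) = 1, gcd(n,a) = 1, δ := ma + nb − mn ≥ 2, and m² + n² − δmn > 0. Define ζ₁ = 0, ζ₂ = 1, ζ_{i+1} = δζ_i − ζ_{i−1} for i ≥ 2. Then there exists an integer i₀ ≥ 1 such that ζ_{i₀+1}m − ζ_{i₀}n ≤ 0, while for every i with 1 ≤ i ≤ i₀ − 1 both ζ_{i+1}m − ζ_in and ζ_{i+1}b − ζ_i(n−a) are positive integers. -/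
/-- Mori's sequence `ζ₁ = 0`, `ζ₂ = 1`, `ζ_{i+1} = δζ_i - ζ_{i-1}`,
for a k2A extremal neighborhood with data `(m,b)`, `(n,a)`, `δ = ma + nb - mn ≥ 2`
and `Δ = m² + n² - δmn > 0`: there is `i₀ ≥ 1` with `ζ_{i₀+1}m - ζ_{i₀}n ≤ 0`,
while for `1 ≤ i ≤ i₀ - 1` both `ζ_{i+1}m - ζ_in` and `ζ_{i+1}b - ζ_i(n-a)` are
positive. -/
theorem mori_sequence_stops (m n a b δ : ℤ) (ζ : ℕ → ℤ)
    (hm : 2 ≤ m) (hmn : m < n)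
    (hb : 0 < b) (hbm : b < m) (ha : 0 < a) (han : a < n)
    (hgcdm : Int.gcd m b = 1) (hgcdn : Int.gcd n a = 1)
    (hδdef : δ = m * a + n * b - m * n) (hδ : 2 ≤ δ)
    (hΔ : 0 < m ^ 2 + n ^ 2 - δ * m * n)
    (hζ1 : ζ 1 = 0) (hζ2 : ζ 2 = 1)
    (hζ : ∀ i, 2 ≤ i → ζ (i + 1) = δ * ζ i - ζ (i - 1)) :
    ∃ i₀ : ℕ, 1 ≤ i₀ ∧ ζ (i₀ + 1) * m - ζ i₀ * n ≤ 0 ∧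
      ∀ i, 1 ≤ i → i ≤ i₀ - 1 →
        0 < ζ (i + 1) * m - ζ i * n ∧ 0 < ζ (i + 1) * b - ζ i * (n - a) := by
  classical
  set u : ℕ → ℤ := fun i => ζ (i + 1) * m - ζ i * n with hu
  have hζ' : ∀ j : ℕ, ζ (j + 3) = δ * ζ (j + 2) - ζ (j + 1) := by
    intro j
    have := hζ (j + 2) (by omega)
    simpa using this
  have hζ4 : ∀ j : ℕ, ζ (j + 4) = δ * ζ (j + 3) - ζ (j + 2) := fun j => hζ' (j + 1)
  have hζ3 : ζ 3 = δ := by rw [hζ' 0, hζ2, hζ1]; ring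
  have hu1 : u 1 = m := by simp [hu, hζ1, hζ2]
  have hu2 : u 2 = δ * m - n := by simp [hu, hζ2, hζ3]
  -- ζ is nonnegative and monotone
  have hmono : ∀ i : ℕ, 0 ≤ ζ (i + 1) ∧ ζ (i + 1) ≤ ζ (i + 2) := by
    intro i
    induction i with
    | zero => simp [hζ1, hζ2]
    | succ k ih =>
      obtain ⟨h0, h1⟩ := ih
      refine ⟨by linarith, ?_⟩
      rw [hζ' k]
      nlinarith
  -- recurrence for u
  have hurec : ∀ j : ℕ, u (j + 3) = δ * u (j + 2) - u (j + 1) := by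
    intro j
    show ζ (j + 4) * m - ζ (j + 3) * n =
      δ * (ζ (j + 3) * m - ζ (j + 2) * n) - (ζ (j + 2) * m - ζ (j + 1) * n)
    rw [hζ4 j, hζ' j]
    ring
  -- invariant
  have hQ : ∀ j : ℕ, u (j + 2) ^ 2 - δ * u (j + 2) * u (j + 1) + u (j + 1) ^ 2
      = m ^ 2 + n ^ 2 - δ * m * n := by
    intro j
    induction j with
    | zero =>
      have : u (0 + 2) = δ * m - n := hu2
      rw [this, show u (0 + 1) = m from hu1]
      ring
    | succ k ih =>
      have h3 : u (k + 1 + 2) = δ * u (k + 2) - u (k + 1) := hurec k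
      rw [h3]
      linear_combination ih
  -- base of the decrease: u 2 < u 1
  have hbase : u 2 < u 1 := by
    rw [hu1, hu2]
    by_contra hcon
    push_neg at hcon
    have hn0 : (0 : ℤ) < n := by linarith
    nlinarith [mul_le_mul_of_nonneg_left hcon (le_of_lt hn0)]
  -- while positive, u is strictly decreasing
  have hdec : ∀ k : ℕ, (∀ j, 1 ≤ j → j ≤ k + 2 → 0 < u j) → u (k + 2) < u (k + 1) := by
    intro k
    induction k with
    | zero => intro _; exact hbase
    | succ k ih =>
      intro hpos
      have h1 : u (k + 2) < u (k + 1) := ih (fun j hj hjk => hpos j hj (by omega))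
      have h2 : 0 < u (k + 2) := hpos (k + 2) (by omega) (by omega)
      have h3 : 0 < u (k + 1) := hpos (k + 1) (by omega) (by omega)
      have hq := hQ k
      show u (k + 3) < u (k + 2)
      rw [hurec k]
      by_contra hcon
      push_neg at hcon
      nlinarith [mul_pos h2 h3, mul_le_mul_of_nonneg_left
        (show u (k + 1) ≤ (δ - 1) * u (k + 2) by linarith) (le_of_lt h3)]
  -- u eventually nonpositive
  have hstop : ∃ i, 1 ≤ i ∧ u i ≤ 0 := by
    by_contra hc
    push_neg at hc
    have hall : ∀ k : ℕ, u (k + 1) ≤ u 1 - k := by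
      intro k
      induction k with
      | zero => simp
      | succ k ih =>
        have hlt : u (k + 2) < u (k + 1) := hdec k (fun j hj _ => hc j hj)
        have : u (k + 1 + 1) < u 1 - k := lt_of_lt_of_le hlt ih
        push_cast
        push_cast at this
        linarith
    have h1 := hall (m.toNat + 1)
    have h2 := hc (m.toNat + 1 + 1) (by omega)
    have h3 : ((m.toNat : ℤ)) = m := Int.toNat_of_nonneg (by linarith)
    rw [hu1] at h1
    push_cast at h1
    rw [h3] at h1
    linarith
  -- take the least such index
  refine ⟨Nat.find hstop, (Nat.find_spec hstop).1, (Nat.find_spec hstop).2, ?_⟩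
  intro i hi1 hi2
  have hilt : i < Nat.find hstop := by
    have := (Nat.find_spec hstop).1
    omega
  have hni := Nat.find_min hstop hilt
  have hui : 0 < u i := by
    rcases lt_or_ge 0 (u i) with h | h
    · exact h
    · exact absurd ⟨hi1, h⟩ hni
  refine ⟨hui, ?_⟩
  have hkey : m * (ζ (i + 1) * b - ζ i * (n - a)) = b * u i + δ * ζ i := by
    simp only [hu]
    rw [hδdef]
    ring
  have hζi : 0 ≤ ζ i := by
    obtain ⟨j, rfl⟩ : ∃ j, i = j + 1 := ⟨i - 1, by omega⟩
    exact (hmono j).1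
  have h2 : 0 < m * (ζ (i + 1) * b - ζ i * (n - a)) := by
    rw [hkey]
    have hbu := mul_pos hb hui
    have hdz := mul_nonneg (show (0 : ℤ) ≤ δ by linarith) hζi
    linarith
  by_contra hv
  push_neg at hv
  nlinarith [mul_nonneg (show (0 : ℤ) ≤ m by linarith)
    (show (0 : ℤ) ≤ -(ζ (i + 1) * b - ζ i * (n - a)) by linarith)]
end

section
/- Let d ≥ 1, n ≥ 2, 0 < a < n, gcd(n,a) = 1, and let [b₁,…,b_s] = dn²/(dna−1) be the Hirzebruch–Jung expansion of the T-singularity 1/dn²(1, dna−1), with associated sequences α, β, γ. Then for every j with 1 ≤ j ≤ s, the integer dn divides α_j + β_j, and the quotient ν_j := (α_j + β_j)/(dn) satisfies ν_j = a·α_j − n·γ_j. -/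
/-- for the T-singularity `1/dn²(1, dna-1)` with expansion
`[b₁,…,b_s]` and associated sequences `α = rec2 0 1 b`,
`β = rec2 (dn²) (dna-1) b`, `γ = rec2 (-1) 0 b`, for `1 ≤ j ≤ s` the integer
`dn` divides `α_j + β_j` and the quotient `ν_j` equals `a·α_j - n·γ_j`. -/
theorem T_singularity_multiplicities (d n a : ℤ) (s : ℕ) (b : ℕ → ℤ)
    (hd : 1 ≤ d) (hn : 2 ≤ n) (ha : 0 < a) (han : a < n)
    (hgcd : Int.gcd n a = 1)
    (hs : 1 ≤ s) (hb : ∀ i, 1 ≤ i → i ≤ s → 2 ≤ b i)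
    (hexp : hjCF b 1 s =
      ((d * n ^ 2 : ℤ) : ℚ) / ((d * n * a - 1 : ℤ) : ℚ)) :
    ∀ j, 1 ≤ j → j ≤ s →
      (d * n) ∣ (rec2 0 1 b j + rec2 (d * n ^ 2) (d * n * a - 1) b j) ∧
      rec2 0 1 b j + rec2 (d * n ^ 2) (d * n * a - 1) b j =
        (d * n) * (a * rec2 0 1 b j - n * rec2 (-1) 0 b j) := by
  have key : ∀ j, rec2 0 1 b j + rec2 (d * n ^ 2) (d * n * a - 1) b j =
      (d * n) * (a * rec2 0 1 b j - n * rec2 (-1) 0 b j) := by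
    intro j
    induction j using Nat.twoStepInduction with
    | zero => simp [rec2]; ring
    | one => simp [rec2]
    | more k ih1 ih2 =>
      simp only [rec2] at *
      linear_combination b (k + 1) * ih2 - ih1
  intro j _ _
  exact ⟨⟨_, key j⟩, key j⟩
end

section
/- Let m ≥ 2, 0 < a < m, gcd(m,a) = 1, and let m²/(ma−1) = [e₁,…,e_s] be the Hirzebruch–Jung expansion of the Wahl singularity 1/m²(1, ma−1), with associated sequences α, β, γ. Then β_s = 1, α_s = m(m−a) − 1, and γ_s = a(m−a) − 1; consequently (α_s + β_s)/m = m − a, m² − α_sβ_s = ma + 1, and (ma−1) − γ_sβ_s = a². -/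
lemma hjCF_gt_one (e : ℕ → ℤ) :
    ∀ n i, 0 < n → (∀ j, i ≤ j → j < i + n → 2 ≤ e j) → 1 < hjCF e i n := by
  intro n
  induction n with
  | zero => intro i h; omega
  | succ n ih =>
    intro i _ hb
    have hei : (2 : ℚ) ≤ (e i : ℚ) := by exact_mod_cast hb i le_rfl (by omega)
    rw [show hjCF e i (n + 1) = (e i : ℚ) - (hjCF e (i + 1) n)⁻¹ from rfl]
    rcases Nat.eq_zero_or_pos n with h0 | hpos
    · subst h0; simp [hjCF]; linarith
    · have ht := ih (i + 1) hpos (fun j hj1 hj2 => hb j (by omega) (by omega))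
      have h1 : 0 < (hjCF e (i + 1) n)⁻¹ := inv_pos.mpr (by linarith)
      have h2 : (hjCF e (i + 1) n)⁻¹ < 1 := by
        rw [inv_eq_one_div, div_lt_one (by linarith)]; linarith
      linarith

lemma rec2_step (x0 x1 : ℤ) (b : ℕ → ℤ) (i : ℕ) :
    rec2 x0 x1 b (i + 2) = b (i + 1) * rec2 x0 x1 b (i + 1) - rec2 x0 x1 b i := rfl

lemma rec2_wronskian (x0 x1 y0 y1 : ℤ) (e : ℕ → ℤ) (k : ℕ) :
    rec2 x0 x1 e (k + 1) * rec2 y0 y1 e k - rec2 x0 x1 e k * rec2 y0 y1 e (k + 1)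
      = x1 * y0 - x0 * y1 := by
  induction k with
  | zero => simp [rec2]
  | succ n ih =>
    rw [show rec2 x0 x1 e (n + 2) = e (n + 1) * rec2 x0 x1 e (n + 1) - rec2 x0 x1 e n from rfl,
        show rec2 y0 y1 e (n + 2) = e (n + 1) * rec2 y0 y1 e (n + 1) - rec2 y0 y1 e n from rfl]
    linear_combination ih

set_option maxHeartbeats 1000000 in
/-- for the Wahl singularity `m²/(ma-1) = [e₁,…,e_s]` with
associated sequences `β = rec2 (m²) (ma-1) e`, `α = rec2 0 1 e`,
`γ = rec2 (-1) 0 e`: `β_s = 1`, `α_s = m(m-a)-1`, `γ_s = a(m-a)-1`; hence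
`α_s + β_s = m(m-a)`, `m² - α_sβ_s = ma + 1`, `(ma-1) - γ_sβ_s = a²`. -/
theorem wahl_last_terms (m a : ℤ) (s : ℕ) (e : ℕ → ℤ)
    (hm : 2 ≤ m) (ha : 0 < a) (ham : a < m) (hgcd : Int.gcd m a = 1)
    (hs : 1 ≤ s) (he : ∀ i, 1 ≤ i → i ≤ s → 2 ≤ e i)
    (hexp : hjCF e 1 s = (m : ℚ) ^ 2 / ((m : ℚ) * (a : ℚ) - 1)) :
    rec2 (m ^ 2) (m * a - 1) e s = 1 ∧
    rec2 0 1 e s = m * (m - a) - 1 ∧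
    rec2 (-1) 0 e s = a * (m - a) - 1 ∧
    rec2 0 1 e s + rec2 (m ^ 2) (m * a - 1) e s = m * (m - a) ∧
    m ^ 2 - rec2 0 1 e s * rec2 (m ^ 2) (m * a - 1) e s = m * a + 1 ∧
    (m * a - 1) - rec2 (-1) 0 e s * rec2 (m ^ 2) (m * a - 1) e s = a ^ 2 := by
  set B := rec2 (m ^ 2) (m * a - 1) e with hB
  set A := rec2 0 1 e with hA
  set G := rec2 (-1) 0 e with hG
  have hBrec : ∀ k, B (k + 2) = e (k + 1) * B (k + 1) - B k := fun k => rec2_step _ _ _ k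
  have hB0 : B 0 = m ^ 2 := rfl
  have hB1 : B 1 = m * a - 1 := rfl
  have hma1 : (0 : ℤ) < m * a - 1 := by nlinarith
  have hmaQ : ((m : ℚ) * (a : ℚ) - 1) ≠ 0 := by
    have h : ((m * a - 1 : ℤ) : ℚ) ≠ 0 := Int.cast_ne_zero.mpr (by omega)
    push_cast at h; exact h
  -- key induction on tails
  have key : ∀ k, k < s → 0 < B (k + 1) ∧ B (k + 1) < B k ∧
      (B k : ℚ) = hjCF e (k + 1) (s - k) * (B (k + 1) : ℚ) := by
    intro k
    induction k with
    | zero =>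
      intro _
      refine ⟨by rw [hB1]; exact hma1, by rw [hB0, hB1]; nlinarith, ?_⟩
      rw [hB0, hB1, Nat.sub_zero, hexp]
      push_cast
      field_simp
    | succ n ih =>
      intro hn1
      obtain ⟨hp, hlt, heq⟩ := ih (by omega)
      have hsplit : s - n = (s - (n + 1)) + 1 := by omega
      rw [hsplit] at heq
      rw [show hjCF e (n + 1) ((s - (n + 1)) + 1)
            = (e (n + 1) : ℚ) - (hjCF e (n + 2) (s - (n + 1)))⁻¹ from rfl] at heq
      set t := hjCF e (n + 2) (s - (n + 1)) with htdef
      have ht : 1 < t := by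
        apply hjCF_gt_one e (s - (n + 1)) (n + 2) (by omega)
        intro j hj1 hj2
        exact he j (by omega) (by omega)
      have ht0 : t ≠ 0 := by linarith
      have h2 : (B (n + 2) : ℚ) = t⁻¹ * (B (n + 1) : ℚ) := by
        rw [hBrec n]; push_cast; linarith [heq]
      have h3 : (B (n + 1) : ℚ) = t * (B (n + 2) : ℚ) := by
        rw [h2]; field_simp
      have hpQ : (0 : ℚ) < (B (n + 1) : ℚ) := by exact_mod_cast hp
      have hp2Q : (0 : ℚ) < (B (n + 2) : ℚ) := by
        rw [h2]; positivity
      have hp2 : 0 < B (n + 2) := by exact_mod_cast hp2Q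
      refine ⟨hp2, ?_, h3⟩
      have : (B (n + 2) : ℚ) < (B (n + 1) : ℚ) := by nlinarith
      exact_mod_cast this
  obtain ⟨r, rfl⟩ : ∃ r, s = r + 1 := ⟨s - 1, by omega⟩
  obtain ⟨hBpos, hBlt, hBeq⟩ := key r (by omega)
  have hBr : B r = e (r + 1) * B (r + 1) := by
    rw [show r + 1 - r = 1 from by omega] at hBeq
    rw [show hjCF e (r + 1) 1 = (e (r + 1) : ℚ) - (hjCF e (r + 2) 0)⁻¹ from rfl] at hBeq
    simp [hjCF] at hBeq
    exact_mod_cast hBeq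
  have hBtop : B (r + 2) = 0 := by rw [hBrec r, hBr]; ring
  -- B (r+1) divides all earlier terms
  have hdvd : ∀ k, k ≤ r + 1 → B (r + 1) ∣ B (r + 1 - k) ∧ B (r + 1) ∣ B (r + 2 - k) := by
    intro k
    induction k with
    | zero => intro _; simpa [hBtop] using ⟨dvd_refl _, dvd_zero _⟩
    | succ n ih =>
      intro hn
      obtain ⟨d1, d2⟩ := ih (by omega)
      have h1 : r + 1 - n = (r - n) + 1 := by omega
      have h2 : r + 2 - n = (r - n) + 2 := by omega
      rw [h1] at d1; rw [h2] at d2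
      have hrec : B (r - n) = e (r - n + 1) * B (r - n + 1) - B (r - n + 2) := by
        linarith [hBrec (r - n)]
      constructor
      · rw [show r + 1 - (n + 1) = r - n from by omega, hrec]
        exact dvd_sub (d1.mul_left _) d2
      · rw [show r + 2 - (n + 1) = (r - n) + 1 from by omega]; exact d1
  have hd0 : B (r + 1) ∣ m ^ 2 := by
    have := (hdvd (r + 1) le_rfl).1; rwa [Nat.sub_self, hB0] at this
  have hd1 : B (r + 1) ∣ m * a - 1 := by
    have := (hdvd r (by omega)).1
    rwa [show r + 1 - r = 1 from by omega, hB1] at this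
  have hBs1 : B (r + 1) = 1 := by
    have h1 : B (r + 1) ∣ 1 := by
      have : B (r + 1) ∣ a ^ 2 * m ^ 2 - (m * a + 1) * (m * a - 1) :=
        dvd_sub (hd0.mul_left _) (hd1.mul_left _)
      rwa [show a ^ 2 * m ^ 2 - (m * a + 1) * (m * a - 1) = 1 from by ring] at this
    exact Int.eq_one_of_dvd_one (by omega) h1
  -- Wronskians
  have wAB := rec2_wronskian 0 1 (m ^ 2) (m * a - 1) e (r + 1)
  have wGB := rec2_wronskian (-1) 0 (m ^ 2) (m * a - 1) e (r + 1)
  have wGA := rec2_wronskian (-1) 0 0 1 e (r + 1)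
  rw [← hA, ← hB] at wAB
  rw [← hG, ← hB] at wGB
  rw [← hG, ← hA] at wGA
  rw [hBs1, hBtop] at wAB wGB
  have hA2 : A (r + 2) = m ^ 2 := by linarith [wAB]
  have hG2 : G (r + 2) = m * a - 1 := by linarith [wGB]
  rw [hA2, hG2] at wGA
  -- wGA : (m*a-1) * A (r+1) - G (r+1) * m^2 = 1
  -- A is increasing
  have hmono : ∀ k, k ≤ r + 1 → 0 ≤ A k ∧ A k < A (k + 1) := by
    intro k
    induction k with
    | zero => intro _; exact ⟨le_refl 0, by norm_num [hA, rec2]⟩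
    | succ n ih =>
      intro hn
      obtain ⟨h0, h1⟩ := ih (by omega)
      have he1 : 2 ≤ e (n + 1) := he (n + 1) (by omega) (by omega)
      have hrec : A (n + 2) = e (n + 1) * A (n + 1) - A n := rec2_step _ _ _ n
      constructor
      · omega
      · rw [hrec]; nlinarith
  have hAub : A (r + 1) < m ^ 2 := by rw [← hA2]; exact (hmono (r + 1) le_rfl).2
  have hAlb : 1 ≤ A (r + 1) := by
    have := (hmono r (by omega))
    have hA0 : (0:ℤ) ≤ A r := this.1
    omega
  -- congruence argument
  have hco : IsCoprime ((m : ℤ) ^ 2) (m * a - 1) := ⟨a ^ 2, -(m * a + 1), by ring⟩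
  set c : ℤ := m ^ 2 - m * a - 1 with hc
  have hdc : m ^ 2 ∣ (m * a - 1) * (A (r + 1) - c) := by
    refine ⟨G (r + 1) - (m * a - a ^ 2 - 1), ?_⟩
    rw [hc]; linear_combination wGA
  have hdvdc : m ^ 2 ∣ A (r + 1) - c := hco.dvd_of_dvd_mul_left hdc
  have hcpos : 0 < c := by rw [hc]; nlinarith
  have hclt : c < m ^ 2 := by rw [hc]; nlinarith
  have hAc : A (r + 1) = c := by
    have habs : |A (r + 1) - c| < m ^ 2 := by
      rw [abs_lt]; constructor <;> omega
    have := Int.eq_zero_of_abs_lt_dvd hdvdc habs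
    omega
  have hGval : G (r + 1) = m * a - a ^ 2 - 1 := by
    have hm2 : (m : ℤ) ^ 2 ≠ 0 := by positivity
    have : m ^ 2 * G (r + 1) = m ^ 2 * (m * a - a ^ 2 - 1) := by
      rw [hAc, hc] at wGA; nlinarith [wGA]
    exact mul_left_cancel₀ hm2 this
  refine ⟨hBs1, ?_, ?_, ?_, ?_, ?_⟩
  · rw [hAc, hc]; ring
  · rw [hGval]; ring
  · rw [hAc, hBs1, hc]; ring
  · rw [hAc, hBs1, hc]; ring
  · rw [hGval, hBs1]; ring
end

section
/- Let n₁, n₂, n'₁, n'₂ be positive integers with gcd(n₁,n₂) = 1 and gcd(n'₁,n'₂) = 1. If n'₁n'₂(n₁n₂ − n₁ − n₂) = n₁n₂(n'₁n'₂ − n'₁ − n'₂), then {n₁, n₂} = {n'₁, n'₂} (i.e., (n'₁,n'₂) equals (n₁,n₂) up to permutation). -/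
private lemma coprime_mul_add {a b : ℤ} (h : IsCoprime a b) :
    IsCoprime (a * b) (a + b) := by
  have ha : IsCoprime a (a + b) := by
    have := h.add_mul_left_right 1
    simpa [add_comm, mul_one] using this
  have hb : IsCoprime b (a + b) := by
    have := h.symm.add_mul_left_right 1
    simpa [add_comm, mul_one] using this
  exact ha.mul_left hb

/-- if `n₁, n₂` and `n'₁, n'₂` are coprime pairs of positive
integers with `n'₁n'₂(n₁n₂ - n₁ - n₂) = n₁n₂(n'₁n'₂ - n'₁ - n'₂)`, then
`{n₁, n₂} = {n'₁, n'₂}`. -/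
theorem dolgachev_multiplicities (n₁ n₂ n₁' n₂' : ℤ)
    (h₁ : 0 < n₁) (h₂ : 0 < n₂) (h₁' : 0 < n₁') (h₂' : 0 < n₂')
    (hc : Int.gcd n₁ n₂ = 1) (hc' : Int.gcd n₁' n₂' = 1)
    (h : n₁' * n₂' * (n₁ * n₂ - n₁ - n₂) = n₁ * n₂ * (n₁' * n₂' - n₁' - n₂')) :
    (n₁' = n₁ ∧ n₂' = n₂) ∨ (n₁' = n₂ ∧ n₂' = n₁) := by
  have hco : IsCoprime n₁ n₂ := Int.isCoprime_iff_gcd_eq_one.mpr hc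
  have hco' : IsCoprime n₁' n₂' := Int.isCoprime_iff_gcd_eq_one.mpr hc'
  have key : n₁' * n₂' * (n₁ + n₂) = n₁ * n₂ * (n₁' + n₂') := by linarith [h]
  have H : IsCoprime (n₁ * n₂) (n₁ + n₂) := coprime_mul_add hco
  have H' : IsCoprime (n₁' * n₂') (n₁' + n₂') := coprime_mul_add hco'
  have d1 : n₁ * n₂ ∣ n₁' * n₂' :=
    H.dvd_of_dvd_mul_right ⟨n₁' + n₂', by linarith [key]⟩
  have d2 : n₁' * n₂' ∣ n₁ * n₂ :=
    H'.dvd_of_dvd_mul_right ⟨n₁ + n₂, by linarith [key]⟩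
  have hP : n₁ * n₂ = n₁' * n₂' :=
    Int.dvd_antisymm (by positivity) (by positivity) d1 d2
  have hpne : n₁ * n₂ ≠ 0 := by positivity
  have hS : n₁ + n₂ = n₁' + n₂' := by
    have : n₁ * n₂ * (n₁ + n₂) = n₁ * n₂ * (n₁' + n₂') := by
      rw [hP] at key ⊢; linarith [key]
    exact mul_left_cancel₀ hpne this
  have quad : (n₁' - n₁) * (n₁' - n₂) = 0 := by linear_combination hP - n₁' * hS
  rcases mul_eq_zero.mp quad with h' | h'
  · left; constructor <;> linarith
  · right; constructor <;> linarith
end
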